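/- Fix an integer K ≥ 1, positive reals β_SR,1,…,β_SR,K and β_RD,1,…,β_RD,K, E_S > 0, E_R > 0, α ∈ (0,1], κ ∈ [0,1], and set ρ = 1−α. For a real parameter M > 0 set M0 = κM and M1 = (1−κ)M, and define a_ki(M), b_ki(M), c_k(M), d_k(M) as in equations (50), (47), (48), (49) of the paper. For each k define the SINR with power scaling p_S = E_S/M, p_R = E_R/M by ν_k(M) = E_S / [ E_S·∑_{i=1}^K a_ki(M) + (1/E_R)·( E_S·M·∑_{i=1}^K b_ki(M) + M²·c_k(M) ) + M·d_k(M) ]. Then lim_{M→∞} ν_k(M) = E_S E_R (α+ρκ)² / [ E_S (α+ρκ) ∑_{i=1}^K β_SR,i² β_RD,i/(β_SR,k² β_RD,k²) + (∑_{m=1}^K β_SR,m β_RD,m)/(β_SR,k² β_RD,k²) + E_R (α+ρκ)/β_SR,k ]. -/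
import Mathlib


open Filter

/-- The interference coefficient `a_ki(M)` of equation (50) of the paper, with
`M0 = κM` and `M1 = (1−κ)M`, so that `M0 + αM1 = κM + α(1−κ)M`. -/
noncomputable def aCoef (K : ℕ) (βSR βRD : Fin K → ℝ) (α ρ κ : ℝ) (M : ℝ)
    (k i : Fin K) : ℝ :=
  if i = k then
    (1 / (κ * M + α * ((1 - κ) * M))) *
      (2 + (α * ρ * ((1 - κ) * M) / (κ * M + α * ((1 - κ) * M))) *
          (2 + 2 / (κ * M + α * ((1 - κ) * M)) +
            α * ρ * ((1 - κ) * M) / (κ * M + α * ((1 - κ) * M)) ^ 2)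
        + (1 / (κ * M + α * ((1 - κ) * M))) *
          (∑ m, βSR m * βRD m) / (βSR k * βRD k))
  else
    ((βSR i / βSR k) / (κ * M + α * ((1 - κ) * M))) *
      (1 + α * ρ * ((1 - κ) * M) / (κ * M + α * ((1 - κ) * M)) ^ 2
        + (βSR i * βRD i / (βSR k * βRD k)) *
          (1 + α * ρ * ((1 - κ) * M) / (κ * M + α * ((1 - κ) * M)) ^ 2)
        + (1 / (κ * M + α * ((1 - κ) * M))) *
          (∑ m, βSR m * βRD m) / (βSR k * βRD k))

/-- The coefficient `b_ki(M)` of equation (47) of the paper. -/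
noncomputable def bCoef (K : ℕ) (βSR βRD : Fin K → ℝ) (α ρ κ : ℝ) (M : ℝ)
    (k i : Fin K) : ℝ :=
  (1 / (κ * M + α * ((1 - κ) * M))) * (βSR i ^ 2 * βRD i) /
      (βSR k ^ 2 * βRD k ^ 2) *
      (1 + α * ρ * ((1 - κ) * M) / (κ * M + α * ((1 - κ) * M)) ^ 2)
    + (1 / (κ * M + α * ((1 - κ) * M)) ^ 2) *
      (βSR i * ∑ m, βSR m * βRD m) / (βSR k ^ 2 * βRD k ^ 2)

/-- The coefficient `c_k(M)` of equation (48) of the paper. -/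
noncomputable def cCoef (K : ℕ) (βSR βRD : Fin K → ℝ) (α κ : ℝ) (M : ℝ)
    (k : Fin K) : ℝ :=
  (1 / (κ * M + α * ((1 - κ) * M)) ^ 2) *
    (∑ m, βSR m * βRD m) / (βSR k ^ 2 * βRD k ^ 2)

/-- The coefficient `d_k(M)` of equation (49) of the paper. -/
noncomputable def dCoef (K : ℕ) (βSR βRD : Fin K → ℝ) (α ρ κ : ℝ) (M : ℝ)
    (k : Fin K) : ℝ :=
  1 / ((κ * M + α * ((1 - κ) * M)) * βSR k)
    + α * ρ * ((1 - κ) * M) / ((κ * M + α * ((1 - κ) * M)) ^ 3 * βSR k)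
    + (1 / (κ * M + α * ((1 - κ) * M)) ^ 2) *
      (∑ m, βSR m * βRD m) / (βSR k ^ 2 * βRD k)

/-- The SINR of the `k`-th destination under the power scaling `p_S = E_S/M`,
`p_R = E_R/M` (equation (64) of the paper). -/
noncomputable def scaledSINR (K : ℕ) (βSR βRD : Fin K → ℝ) (α ρ κ ES ER : ℝ)
    (M : ℝ) (k : Fin K) : ℝ :=
  ES / (ES * (∑ i, aCoef K βSR βRD α ρ κ M k i)
    + (1 / ER) * (ES * M * (∑ i, bCoef K βSR βRD α ρ κ M k i)
        + M ^ 2 * cCoef K βSR βRD α κ M k)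
    + M * dCoef K βSR βRD α ρ κ M k)

/-- Auxiliary: the scaled SINR denominator written as a polynomial-like
function of `t = 1/M`, with `g = α + ρκ` and `w = αρ(1-κ)`. -/
noncomputable def FD (K : ℕ) (βSR βRD : Fin K → ℝ) (g w ES ER : ℝ)
    (k : Fin K) (t : ℝ) : ℝ :=
  ES * (∑ i, (if i = k then
      (t / g) * (2 + (w / g) * (2 + 2 * (t / g) + w * t / g ^ 2)
        + (t / g) * (∑ m, βSR m * βRD m) / (βSR k * βRD k))
    else
      ((βSR i / βSR k) * (t / g)) *
        (1 + w * t / g ^ 2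
          + (βSR i * βRD i / (βSR k * βRD k)) * (1 + w * t / g ^ 2)
          + (t / g) * (∑ m, βSR m * βRD m) / (βSR k * βRD k))))
  + (1 / ER) * (ES * (∑ i, ((1 / g) * (βSR i ^ 2 * βRD i) / (βSR k ^ 2 * βRD k ^ 2) * (1 + w * t / g ^ 2)
        + (t / g ^ 2) * (βSR i * ∑ m, βSR m * βRD m) / (βSR k ^ 2 * βRD k ^ 2)))
      + (1 / g ^ 2) * (∑ m, βSR m * βRD m) / (βSR k ^ 2 * βRD k ^ 2))
  + (1 / (g * βSR k) + w * t / (g ^ 3 * βSR k)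
      + (t / g ^ 2) * (∑ m, βSR m * βRD m) / (βSR k ^ 2 * βRD k))

set_option maxHeartbeats 2000000 in
/-- **power-scaling law, Corollary 1 / equation (63).**
With `α ∈ (0,1]`, `κ ∈ [0,1]`, `ρ = 1 − α`, `M0 = κM`, `M1 = (1−κ)M`, and transmit
powers scaled as `p_S = E_S/M`, `p_R = E_R/M`, the SINR `ν_k(M)` of the `k`-th
destination converges as `M → ∞` to
`E_S E_R (α+ρκ)² / [E_S (α+ρκ) ∑ᵢ β_SR,i² β_RD,i/(β_SR,k² β_RD,k²)
  + (∑ₘ β_SR,m β_RD,m)/(β_SR,k² β_RD,k²) + E_R (α+ρκ)/β_SR,k]`. -/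
theorem power_scaling_law (K : ℕ) (hK : 1 ≤ K)
    (βSR βRD : Fin K → ℝ) (hβSR : ∀ j, 0 < βSR j) (hβRD : ∀ j, 0 < βRD j)
    (ES ER : ℝ) (hES : 0 < ES) (hER : 0 < ER)
    (α κ ρ : ℝ) (hα : α ∈ Set.Ioc (0 : ℝ) 1) (hκ : κ ∈ Set.Icc (0 : ℝ) 1)
    (hρ : ρ = 1 - α) (k : Fin K) :
    Tendsto (fun M : ℝ => scaledSINR K βSR βRD α ρ κ ES ER M k) atTop
      (nhds (ES * ER * (α + ρ * κ) ^ 2 /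
        (ES * (α + ρ * κ) *
            (∑ i, βSR i ^ 2 * βRD i / (βSR k ^ 2 * βRD k ^ 2))
          + (∑ m, βSR m * βRD m) / (βSR k ^ 2 * βRD k ^ 2)
          + ER * (α + ρ * κ) / βSR k))) := by
  obtain ⟨hα0, hα1⟩ := hα
  obtain ⟨hκ0, hκ1⟩ := hκ
  subst hρ
  have hne : Nonempty (Fin K) := Fin.pos_iff_nonempty.mp hK
  have hγ : 0 < α + (1 - α) * κ := by nlinarith
  have hBk := (hβSR k).ne'
  have hRk := (hβRD k).ne'
  set g := α + (1 - α) * κ with hg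
  set w := α * (1 - α) * (1 - κ) with hw
  have hgne : g ≠ 0 := hγ.ne'
  clear_value g w
  have hS1 : 0 < ∑ i, βSR i ^ 2 * βRD i / (βSR k ^ 2 * βRD k ^ 2) :=
    Finset.sum_pos (fun i _ => by have := hβSR i; have := hβRD i; have := hβSR k; have := hβRD k; positivity) Finset.univ_nonempty
  have hS2 : 0 < ∑ m, βSR m * βRD m :=
    Finset.sum_pos (fun i _ => mul_pos (hβSR i) (hβRD i)) Finset.univ_nonempty
  have hcont : Continuous (FD K βSR βRD g w ES ER k) := by
    unfold FD
    apply Continuous.add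
    apply Continuous.add
    · apply Continuous.mul continuous_const
      apply continuous_finset_sum
      intro i _
      split_ifs <;> fun_prop
    · fun_prop
    · fun_prop
  have hFD0 : FD K βSR βRD g w ES ER k 0
      = (1 / ER) * (ES * ((1 / g) * ∑ i, βSR i ^ 2 * βRD i / (βSR k ^ 2 * βRD k ^ 2))
          + (1 / g ^ 2) * (∑ m, βSR m * βRD m) / (βSR k ^ 2 * βRD k ^ 2))
        + 1 / (g * βSR k) := by
    unfold FD
    simp only [zero_div, mul_zero, zero_mul, add_zero, zero_add, mul_one, ite_self,
      Finset.sum_const_zero]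
    have hsum : (∑ i, 1 / g * (βSR i ^ 2 * βRD i) / (βSR k ^ 2 * βRD k ^ 2))
        = (1 / g) * ∑ i, βSR i ^ 2 * βRD i / (βSR k ^ 2 * βRD k ^ 2) := by
      rw [Finset.mul_sum]
      exact Finset.sum_congr rfl fun i _ => by ring
    rw [hsum]
  have hBRk2 : (0:ℝ) < βSR k ^ 2 * βRD k ^ 2 := by
    have := hβSR k; have := hβRD k; positivity
  have hpos0' : (0:ℝ) < (1 / ER) * (ES * ((1 / g) * ∑ i, βSR i ^ 2 * βRD i / (βSR k ^ 2 * βRD k ^ 2))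
          + (1 / g ^ 2) * (∑ m, βSR m * βRD m) / (βSR k ^ 2 * βRD k ^ 2))
        + 1 / (g * βSR k) :=
    add_pos (mul_pos (one_div_pos.mpr hER)
        (add_pos (mul_pos hES (mul_pos (one_div_pos.mpr hγ) hS1))
          (div_pos (mul_pos (one_div_pos.mpr (pow_pos hγ 2)) hS2) hBRk2)))
      (one_div_pos.mpr (mul_pos hγ (hβSR k)))
  have hpos0 : 0 < FD K βSR βRD g w ES ER k 0 := by
    rw [hFD0]; exact hpos0'
  have hlim : Tendsto (fun M : ℝ => ES / FD K βSR βRD g w ES ER k M⁻¹) atTop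
      (nhds (ES / FD K βSR βRD g w ES ER k 0)) := by
    exact (Tendsto.div tendsto_const_nhds
      (hcont.tendsto 0) hpos0.ne').comp tendsto_inv_atTop_zero
  have hval : ES / FD K βSR βRD g w ES ER k 0
      = ES * ER * g ^ 2 /
        (ES * g * (∑ i, βSR i ^ 2 * βRD i / (βSR k ^ 2 * βRD k ^ 2))
          + (∑ m, βSR m * βRD m) / (βSR k ^ 2 * βRD k ^ 2)
          + ER * g / βSR k) := by
    rw [hFD0]
    have h1 : (0:ℝ) < (1 / ER) * (ES * ((1 / g) * ∑ i, βSR i ^ 2 * βRD i / (βSR k ^ 2 * βRD k ^ 2))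
          + (1 / g ^ 2) * (∑ m, βSR m * βRD m) / (βSR k ^ 2 * βRD k ^ 2))
        + 1 / (g * βSR k) := hpos0'
    have h2 : (0:ℝ) < ES * g * (∑ i, βSR i ^ 2 * βRD i / (βSR k ^ 2 * βRD k ^ 2))
          + (∑ m, βSR m * βRD m) / (βSR k ^ 2 * βRD k ^ 2)
          + ER * g / βSR k :=
      add_pos (add_pos (mul_pos (mul_pos hES hγ) hS1) (div_pos hS2 hBRk2))
        (div_pos (mul_pos hER hγ) (hβSR k))
    rw [div_eq_div_iff h1.ne' h2.ne']
    field_simp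
  rw [← hval]
  refine hlim.congr' ?_
  filter_upwards [eventually_gt_atTop (0:ℝ)] with M hM
  have hMne : M ≠ 0 := hM.ne'
  have hDM : κ * M + α * ((1 - κ) * M) = g * M := by rw [hg]; ring
  have hDMne : κ * M + α * ((1 - κ) * M) ≠ 0 := by
    rw [hDM]; exact mul_ne_zero hgne hMne
  have hWM : α * (1 - α) * ((1 - κ) * M) = w * M := by rw [hw]; ring
  have hgMne : g * M ≠ 0 := mul_ne_zero hgne hMne
  unfold scaledSINR
  congr 1
  have ha : (∑ i, aCoef K βSR βRD α (1 - α) κ M k i)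
      = ∑ i, (if i = k then
        (M⁻¹ / g) * (2 + (w / g) * (2 + 2 * (M⁻¹ / g) + w * M⁻¹ / g ^ 2)
          + (M⁻¹ / g) * (∑ m, βSR m * βRD m) / (βSR k * βRD k))
      else
        ((βSR i / βSR k) * (M⁻¹ / g)) *
          (1 + w * M⁻¹ / g ^ 2
            + (βSR i * βRD i / (βSR k * βRD k)) * (1 + w * M⁻¹ / g ^ 2)
            + (M⁻¹ / g) * (∑ m, βSR m * βRD m) / (βSR k * βRD k))) := by
    refine Finset.sum_congr rfl fun i _ => ?_
    unfold aCoef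
    split_ifs with h
    · rw [hDM, hWM]
      field_simp
    · rw [hDM, hWM]
      field_simp
  have hb : ES * M * (∑ i, bCoef K βSR βRD α (1 - α) κ M k i)
      = ES * (∑ i, ((1 / g) * (βSR i ^ 2 * βRD i) / (βSR k ^ 2 * βRD k ^ 2) * (1 + w * M⁻¹ / g ^ 2)
        + (M⁻¹ / g ^ 2) * (βSR i * ∑ m, βSR m * βRD m) / (βSR k ^ 2 * βRD k ^ 2))) := by
    rw [mul_assoc, Finset.mul_sum]
    congr 1
    refine Finset.sum_congr rfl fun i _ => ?_
    unfold bCoef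
    rw [hDM, hWM]
    field_simp
  have hc : M ^ 2 * cCoef K βSR βRD α κ M k
      = (1 / g ^ 2) * (∑ m, βSR m * βRD m) / (βSR k ^ 2 * βRD k ^ 2) := by
    unfold cCoef
    rw [hDM]
    field_simp
  have hd : M * dCoef K βSR βRD α (1 - α) κ M k
      = 1 / (g * βSR k) + w * M⁻¹ / (g ^ 3 * βSR k)
        + (M⁻¹ / g ^ 2) * (∑ m, βSR m * βRD m) / (βSR k ^ 2 * βRD k) := by
    unfold dCoef
    rw [hDM, hWM]
    field_simp
  unfold FD
  rw [ha, hb, hc, hd]
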